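/- Let G be a finite group and suppose the members of S(G) ∩ R(G) are mutually normalizing, i.e. N ≤ Norm_B(M) for all N, M ∈ S(G) ∩ R(G). Let P ⊆ B be a set such that β ↦ β λ(G) β⁻¹ is a bijection from P onto S(G) ∩ R(G), and suppose P is inv-closed: for each β ∈ P there exists α ∈ P with β⁻¹ λ(G) β = α λ(G) α⁻¹. Then P is conj-closed: for all α, β ∈ P there exists γ ∈ P with α β λ(G) β⁻¹ α⁻¹ = γ λ(G) γ⁻¹. -/

import Mathlib

open Equiv Pointwise

/-- A subgroup `N ≤ Perm X` is regular if for all `x y : X` there is exactly one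
element of `N` sending `x` to `y`. -/
def IsRegularSubgroup {X : Type*} (N : Subgroup (Equiv.Perm X)) : Prop :=
  ∀ x y : X, ∃! η : N, (η : Equiv.Perm X) x = y

/-- The image `λ(G)` of the left regular representation `λ : G → Perm G`. -/
def lamG (G : Type*) [Group G] : Subgroup (Equiv.Perm G) :=
  (MulAction.toPermHom G G).range

/-- The holomorph `Hol(G) = Norm_B(λ(G))`. -/
def Hol (G : Type*) [Group G] : Subgroup (Equiv.Perm G) :=
  Subgroup.normalizer (lamG G : Set (Equiv.Perm G))

/-- `H(G)`: regular subgroups isomorphic to `G` whose normalizer is `Hol(G)`. -/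
def HClass (G : Type*) [Group G] : Set (Subgroup (Equiv.Perm G)) :=
  {N | IsRegularSubgroup N ∧ Nonempty (N ≃* G) ∧ Subgroup.normalizer (N : Set (Equiv.Perm G)) = Hol G}

/-- `S(G)`: regular subgroups isomorphic to `G` contained in `Hol(G)`. -/
def SClass (G : Type*) [Group G] : Set (Subgroup (Equiv.Perm G)) :=
  {N | IsRegularSubgroup N ∧ Nonempty (N ≃* G) ∧ N ≤ Hol G}

/-- `R(G)`: regular subgroups isomorphic to `G` normalized by `λ(G)`. -/
def RClass (G : Type*) [Group G] : Set (Subgroup (Equiv.Perm G)) :=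
  {N | IsRegularSubgroup N ∧ Nonempty (N ≃* G) ∧ lamG G ≤ Subgroup.normalizer (N : Set (Equiv.Perm G))}

/-- `Q(G)`: members of `S(G) ∩ R(G)` normalized by every member of `S(G) ∩ R(G)`. -/
def QClass (G : Type*) [Group G] : Set (Subgroup (Equiv.Perm G)) :=
  {M ∈ SClass G ∩ RClass G | ∀ N ∈ SClass G ∩ RClass G, N ≤ Subgroup.normalizer (M : Set (Equiv.Perm G))}

/-- Conjugate of a subgroup: `b N b⁻¹`. -/
def conjSub {H : Type*} [Group H] (b : H) (N : Subgroup H) : Subgroup H :=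
  Subgroup.map (MulAut.conj b).toMonoidHom N

/-
Write `L = λ(G)` and `SR = S(G) ∩ R(G)`. For `α, β ∈ P`, inv-closedness puts `α⁻¹ L α` in `SR`.
Conjugation by `α` transports normalizers, so from mutual normalization between `α⁻¹ L α` and
`N ∈ SR` we get `α N α⁻¹ ≤ Norm(L) = Hol(G)` and `L ≤ Norm(α N α⁻¹)`: conjugation by `α`
maps `SR` into itself. Taking `N = β L β⁻¹` gives `αβ L (αβ)⁻¹ ∈ SR`, which by surjectivity
of `P → SR` is `γ L γ⁻¹` for some `γ ∈ P`.
-/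

section ConjSub

variable {H : Type*} [Group H]

lemma conjSub_mul (a b : H) (N : Subgroup H) :
    conjSub (a * b) N = conjSub a (conjSub b N) := by
  rw [conjSub, conjSub, conjSub, Subgroup.map_map]
  congr 1
  ext x
  simp [mul_assoc]

@[simp]
lemma conjSub_conjSub_inv (a : H) (N : Subgroup H) : conjSub a (conjSub a⁻¹ N) = N := by
  rw [← conjSub_mul, mul_inv_cancel]
  ext x
  simp [conjSub]

lemma normalizer_conjSub (a : H) (N : Subgroup H) :
    Subgroup.normalizer (conjSub a N : Set H) = conjSub a (Subgroup.normalizer (N : Set H)) :=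
  (Subgroup.map_equiv_normalizer_eq N (MulAut.conj a)).symm

lemma conjSub_le_normalizer_conjSub (a : H) {N M : Subgroup H}
    (h : N ≤ Subgroup.normalizer (M : Set H)) :
    conjSub a N ≤ Subgroup.normalizer (conjSub a M : Set H) := by
  rw [normalizer_conjSub]
  exact Subgroup.map_mono h

def conjSubEquiv (a : H) (N : Subgroup H) : N ≃* conjSub a N :=
  MulEquiv.subgroupMap (MulAut.conj a) N

lemma coe_conjSubEquiv_apply (a : H) (N : Subgroup H) (n : N) :
    (conjSubEquiv a N n : H) = a * n * a⁻¹ :=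
  rfl

end ConjSub

lemma IsRegularSubgroup.conjSub {X : Type*} {N : Subgroup (Perm X)} (h : IsRegularSubgroup N)
    (a : Perm X) : IsRegularSubgroup (conjSub a N) := by
  intro x y
  refine ((conjSubEquiv a N).toEquiv.existsUnique_congr fun n => ?_).mp (h (a⁻¹ x) (a⁻¹ y))
  simp [coe_conjSubEquiv_apply, Perm.mul_apply, eq_symm_apply]

lemma conjSub_mem_SClass_inter_RClass {G : Type*} [Group G]
    (hmut : ∀ N ∈ SClass G ∩ RClass G, ∀ M ∈ SClass G ∩ RClass G,
      N ≤ Subgroup.normalizer (M : Set (Perm G)))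
    {a : Perm G} (ha : conjSub a⁻¹ (lamG G) ∈ SClass G ∩ RClass G)
    {N : Subgroup (Perm G)} (hN : N ∈ SClass G ∩ RClass G) :
    conjSub a N ∈ SClass G ∩ RClass G := by
  obtain ⟨e⟩ := hN.1.2.1
  have hreg' : IsRegularSubgroup (conjSub a N) := hN.1.1.conjSub a
  have he : Nonempty (conjSub a N ≃* G) := ⟨(conjSubEquiv a N).symm.trans e⟩
  have hHol : conjSub a N ≤ Hol G := by
    simpa [Hol] using conjSub_le_normalizer_conjSub a (hmut N hN _ ha)
  have hlam : lamG G ≤ Subgroup.normalizer (conjSub a N : Set (Perm G)) := by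
    simpa using conjSub_le_normalizer_conjSub a (hmut _ ha N hN)
  exact ⟨⟨hreg', he, hHol⟩, hreg', he, hlam⟩

theorem conjClosed_of_invClosed_general (G : Type*) [Group G]
    (hmut : ∀ N ∈ SClass G ∩ RClass G, ∀ M ∈ SClass G ∩ RClass G, N ≤ Subgroup.normalizer (M : Set (Equiv.Perm G)))
    (P : Set (Equiv.Perm G))
    (hbij : Set.BijOn (fun b => conjSub b (lamG G)) P (SClass G ∩ RClass G))
    (hinv : ∀ b ∈ P, ∃ a ∈ P, conjSub b⁻¹ (lamG G) = conjSub a (lamG G)) :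
    ∀ a ∈ P, ∀ b ∈ P, ∃ c ∈ P, conjSub (a * b) (lamG G) = conjSub c (lamG G) := by
  intro a ha b hb
  obtain ⟨a', ha', hinv_a⟩ := hinv a ha
  have hmem : conjSub (a * b) (lamG G) ∈ SClass G ∩ RClass G := by
    rw [conjSub_mul]
    exact conjSub_mem_SClass_inter_RClass hmut (hinv_a ▸ hbij.mapsTo ha') (hbij.mapsTo hb)
  obtain ⟨c, hc, hceq⟩ := hbij.surjOn hmem
  exact ⟨c, hc, hceq.symm⟩

/-- If the members of `S(G) ∩ R(G)` are mutually normalizing and `P` is an inv-closed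
parameterizing set for `S(G) ∩ R(G)`, then `P` is conj-closed. -/
theorem conjClosed_of_invClosed (G : Type*) [Group G] [Finite G]
    (hmut : ∀ N ∈ SClass G ∩ RClass G, ∀ M ∈ SClass G ∩ RClass G, N ≤ Subgroup.normalizer (M : Set (Equiv.Perm G)))
    (P : Set (Equiv.Perm G))
    (hbij : Set.BijOn (fun b => conjSub b (lamG G)) P (SClass G ∩ RClass G))
    (hinv : ∀ b ∈ P, ∃ a ∈ P, conjSub b⁻¹ (lamG G) = conjSub a (lamG G)) :
    ∀ a ∈ P, ∀ b ∈ P, ∃ c ∈ P, conjSub (a * b) (lamG G) = conjSub c (lamG G) :=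
  conjClosed_of_invClosed_general G hmut P hbij hinv
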